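/- arXiv:2305.14496 — 2 statements merged into one kernel-verified Lean document; each statement's English description precedes it below -/
import Mathlib

section
/- Suppose the rate-function family satisfies the growth conditions (G1) and (G2), I_θ(0) = 0 for all θ ∈ Θ, and J : Θ → ℝ is continuous. Fix r > 0, δ ≥ 0 and θ'_0 ∈ Θ, and assume the LDP lower bound at θ'_0. Let (Φ̄_T)_{T>0} be a family of Borel measurable functions E → ℝ that is eventually equi-upper semicontinuous, and suppose Δ := liminf_{T→∞}(J̄^δ_{T,r}(θ'_0) − Φ̄_T(θ'_0)) > 0. Then lim_{T→∞} (1/b_T) log P_{θ'_0}(J(θ'_0) > Φ̄_T(θ̂_T)) = 0. -/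
set_option autoImplicit false

open Filter Topology Metric Set MeasureTheory

noncomputable section

variable {E : Type*} [NormedAddCommGroup E] [NormedSpace ℝ E]

/-- The sublevel set `S_{θ,r} = {ϑ ∈ E : I_θ(ϑ) ≤ r}` of the rate function. -/
def sublevelSet (I : E → E → ENNReal) (θ : E) (r : ℝ) : Set E :=
  {ϑ : E | I θ ϑ ≤ ENNReal.ofReal r}

/-- The open `δ`-fattening `S^δ_{θ,r}` of the sublevel set, where `S^0_{θ,r} = S_{θ,r}`;
for `δ > 0` it is the set of points at distance `< δ` from `S_{θ,r}`, i.e. the union of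
open balls of radius `δ` around points of `S_{θ,r}`. -/
def fatSublevel (I : E → E → ENNReal) (θ : E) (r δ : ℝ) : Set E :=
  if δ = 0 then sublevelSet I θ r
  else ⋃ ϑ ∈ sublevelSet I θ r, Metric.ball ϑ δ

/-- Growth condition (G1): for sequences `θ_n ∈ Θ` with `sup_n ‖θ_n‖ < ∞` and
`‖ϑ_n‖ → ∞`, `I_{θ_n}(ϑ_n) → ∞`. -/
def GrowthG1 (Θ : Set E) (I : E → E → ENNReal) : Prop :=
  ∀ θs ϑs : ℕ → E, (∀ n, θs n ∈ Θ) → (∃ C : ℝ, ∀ n, ‖θs n‖ ≤ C) →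
    Tendsto (fun n => ‖ϑs n‖) atTop atTop →
    Tendsto (fun n => I (θs n) (ϑs n)) atTop (nhds ⊤)

/-- Growth condition (G2): for sequences `θ_n ∈ Θ` with `‖θ_n‖ → ∞` and
`‖ϑ_n‖/‖θ_n‖ → ∞`, `limsup_n I_{θ_n}(ϑ_n) = ∞`. -/
def GrowthG2 (Θ : Set E) (I : E → E → ENNReal) : Prop :=
  ∀ θs ϑs : ℕ → E, (∀ n, θs n ∈ Θ) →
    Tendsto (fun n => ‖θs n‖) atTop atTop →
    Tendsto (fun n => ‖ϑs n‖ / ‖θs n‖) atTop atTop →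
    Filter.limsup (fun n => I (θs n) (ϑs n)) atTop = ⊤

/-- The upper confidence bound `J̄^δ_{T,r}(θ') = sup {J(θ) : θ ∈ Θ, a_T (θ' - θ) ∈ S^δ_{θ,r}}`. -/
def upperCB (Θ : Set E) (I : E → E → ENNReal) (J : E → ℝ) (r δ : ℝ) (a : ℝ → ℝ)
    (T : ℝ) (θ' : E) : ℝ :=
  sSup (J '' {θ : E | θ ∈ Θ ∧ a T • (θ' - θ) ∈ fatSublevel I θ r δ})

/-- The lower confidence bound `J̲^δ_{T,r}(θ') = inf {J(θ) : θ ∈ Θ, a_T (θ' - θ) ∈ S^δ_{θ,r}}`. -/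
def lowerCB (Θ : Set E) (I : E → E → ENNReal) (J : E → ℝ) (r δ : ℝ) (a : ℝ → ℝ)
    (T : ℝ) (θ' : E) : ℝ :=
  sInf (J '' {θ : E | θ ∈ Θ ∧ a T • (θ' - θ) ∈ fatSublevel I θ r δ})

variable {Ω : Type*} [MeasurableSpace Ω]

/-- LDP lower bound at `θ0` for the family `a_T (θ̂_T − θ0)` with speed `b_T`:
for every open `G ⊆ E`,
`liminf_{T→∞} (1/b_T) log P(a_T(θ̂_T − θ0) ∈ G) ≥ − inf_{ϑ ∈ G} I(ϑ)`. -/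
def LDPLowerAt (P : Measure Ω) (θhat : ℝ → Ω → E) (a b : ℝ → ℝ)
    (Irate : E → ENNReal) (θ0 : E) : Prop :=
  ∀ G : Set E, IsOpen G →
    -(((⨅ ϑ ∈ G, Irate ϑ) : ENNReal) : EReal) ≤
      Filter.liminf
        (fun T => (((b T)⁻¹ : ℝ) : EReal) *
          ENNReal.log (P {ω | a T • (θhat T ω - θ0) ∈ G})) atTop

/-- LDP upper bound at `θ0` for the family `a_T (θ̂_T − θ0)` with speed `b_T`:
for every closed `F ⊆ E`,
`limsup_{T→∞} (1/b_T) log P(a_T(θ̂_T − θ0) ∈ F) ≤ − inf_{ϑ ∈ F} I(ϑ)`. -/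
def LDPUpperAt (P : Measure Ω) (θhat : ℝ → Ω → E) (a b : ℝ → ℝ)
    (Irate : E → ENNReal) (θ0 : E) : Prop :=
  ∀ F : Set E, IsClosed F →
    Filter.limsup
      (fun T => (((b T)⁻¹ : ℝ) : EReal) *
        ENNReal.log (P {ω | a T • (θhat T ω - θ0) ∈ F})) atTop ≤
      -(((⨅ ϑ ∈ F, Irate ϑ) : ENNReal) : EReal)

/-- Eventual equi-upper semicontinuity at a point. -/
def EvEquiUSCAt {W : Type*} [PseudoMetricSpace W] (φ : ℝ → W → ℝ) (w0 : W) : Prop :=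
  ∀ ε > (0 : ℝ), ∃ δ > (0 : ℝ), ∃ T0 > (0 : ℝ),
    ∀ T ≥ T0, ∀ w ∈ Metric.closedBall w0 δ, φ T w - φ T w0 < ε

/-! Since `a_T → ∞`, the growth conditions force every `θ ∈ Θ` with `a_T (θ'_0 - θ) ∈ S^δ_{θ,r}`
to lie close to `θ'_0` for large `T`, so by continuity of `J`, for any `0 < c < Δ` the bound
`J̄^δ_{T,r}(θ'_0)` is eventually at most `J(θ'_0) + c/2`, whence `Φ̄_T(θ'_0) + c/2 ≤ J(θ'_0)`.
By equi-upper semicontinuity the event `J(θ'_0) > Φ̄_T(θ̂_T)` then eventually contains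
`a_T (θ̂_T - θ'_0) ∈ B(0, 1)`, whose probability decays subexponentially by the LDP lower bound,
because `I_{θ'_0}(0) = 0`. -/

section

omit [NormedSpace ℝ E]

lemma exists_mem_sublevelSet_of_mem_fatSublevel {I : E → E → ENNReal} {θ x : E} {r δ : ℝ}
    (hx : x ∈ fatSublevel I θ r δ) : ∃ ϑ ∈ sublevelSet I θ r, ‖x - ϑ‖ ≤ δ := by
  unfold fatSublevel at hx
  split_ifs at hx with hδ
  · exact ⟨x, hx, by simp [hδ]⟩
  · obtain ⟨ϑ, hϑ, hxϑ⟩ := mem_iUnion₂.mp hx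
    exact ⟨ϑ, hϑ, (dist_eq_norm x ϑ ▸ mem_ball.mp hxϑ).le⟩

lemma zero_mem_fatSublevel {I : E → E → ENNReal} {θ : E} {r δ : ℝ} (hδ : 0 ≤ δ)
    (hI0 : I θ 0 = 0) : (0 : E) ∈ fatSublevel I θ r δ := by
  have h0 : (0 : E) ∈ sublevelSet I θ r := by simp [sublevelSet, hI0]
  unfold fatSublevel
  split_ifs with h
  · exact h0
  · exact mem_biUnion h0 (mem_ball_self (lt_of_le_of_ne hδ (Ne.symm h)))

lemma GrowthG1.exists_lt {Θ : Set E} {I : E → E → ENNReal} (hG1 : GrowthG1 Θ I)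
    {θs ϑs : ℕ → E} (hθs : ∀ n, θs n ∈ Θ) (hbdd : ∃ C : ℝ, ∀ n, ‖θs n‖ ≤ C)
    (hϑs : Tendsto (fun n => ‖ϑs n‖) atTop atTop) {R : ENNReal} (hR : R ≠ ⊤) :
    ∃ n, R < I (θs n) (ϑs n) :=
  ((hG1 θs ϑs hθs hbdd hϑs).eventually (Ioi_mem_nhds hR.lt_top)).exists

lemma GrowthG2.exists_lt {Θ : Set E} {I : E → E → ENNReal} (hG2 : GrowthG2 Θ I)
    {θs ϑs : ℕ → E} (hθs : ∀ n, θs n ∈ Θ) (hθtop : Tendsto (fun n => ‖θs n‖) atTop atTop)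
    (hratio : Tendsto (fun n => ‖ϑs n‖ / ‖θs n‖) atTop atTop) {R : ENNReal} (hR : R ≠ ⊤) :
    ∃ n, R < I (θs n) (ϑs n) :=
  (frequently_lt_of_lt_limsup (by isBoundedDefault)
    ((hG2 θs ϑs hθs hθtop hratio).symm ▸ hR.lt_top)).exists

lemma exists_lt_rate_of_far {Θ : Set E} {I : E → E → ENNReal} (hG1 : GrowthG1 Θ I)
    (hG2 : GrowthG2 Θ I) {θ0 : E} {ε δ : ℝ} (hε : 0 < ε) (hδ : 0 ≤ δ) {c : ℕ → ℝ}
    (hc : Tendsto c atTop atTop) {θs ϑs : ℕ → E} (hθs : ∀ n, θs n ∈ Θ)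
    (hfar : ∀ n, ε ≤ ‖θs n - θ0‖) (hϑs : ∀ n, c n * ‖θs n - θ0‖ - δ ≤ ‖ϑs n‖)
    {R : ENNReal} (hR : R ≠ ⊤) : ∃ n, R < I (θs n) (ϑs n) := by
  by_cases hθtop : Tendsto (fun n => ‖θs n‖) atTop atTop
  · refine hG2.exists_lt hθs hθtop (tendsto_atTop_mono' atTop ?_
      (tendsto_atTop_add_const_right _ (-δ) (hc.atTop_div_const two_pos))) hR
    filter_upwards [hθtop.eventually_ge_atTop (max 1 (2 * ‖θ0‖)), hc.eventually_ge_atTop 0]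
      with n hn hcn
    have hθ1 : 1 ≤ ‖θs n‖ := (le_max_left _ _).trans hn
    have hhalf : ‖θs n‖ / 2 ≤ ‖θs n - θ0‖ := by
      linarith [norm_sub_norm_le (θs n) θ0, (le_max_right _ _).trans hn]
    rw [le_div_iff₀ (one_pos.trans_le hθ1)]
    nlinarith [hϑs n, mul_le_mul_of_nonneg_left hhalf hcn, mul_le_mul_of_nonneg_left hθ1 hδ]
  · simp only [Filter.tendsto_atTop, not_forall, not_eventually, not_le] at hθtop
    obtain ⟨C, hC⟩ := hθtop
    obtain ⟨φ, hφ, hφC⟩ := extraction_of_frequently_atTop hC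
    have hcφ : Tendsto (fun n => c (φ n)) atTop atTop := hc.comp hφ.tendsto_atTop
    have hϑφ : Tendsto (fun n => ‖ϑs (φ n)‖) atTop atTop := by
      refine tendsto_atTop_mono' atTop ?_
        (tendsto_atTop_add_const_right _ (-δ) (hcφ.atTop_mul_const hε))
      filter_upwards [hcφ.eventually_ge_atTop 0] with n hcn
      linarith [hϑs (φ n), mul_le_mul_of_nonneg_left (hfar (φ n)) hcn]
    obtain ⟨n, hn⟩ := hG1.exists_lt (fun n => hθs (φ n)) ⟨C, fun n => (hφC n).le⟩ hϑφ hR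
    exact ⟨φ n, hn⟩

end

lemma eventually_norm_sub_lt_of_smul_mem_fatSublevel {Θ : Set E} {I : E → E → ENNReal}
    (hG1 : GrowthG1 Θ I) (hG2 : GrowthG2 Θ I) {a : ℝ → ℝ} (ha : Tendsto a atTop atTop)
    {r δ : ℝ} (hδ : 0 ≤ δ) (θ0 : E) {ε : ℝ} (hε : 0 < ε) :
    ∀ᶠ T in atTop, ∀ θ ∈ Θ, a T • (θ0 - θ) ∈ fatSublevel I θ r δ → ‖θ - θ0‖ < ε := by
  by_contra hcon
  have hbad : ∀ n : ℕ, ∃ T, (n : ℝ) ≤ T ∧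
      ∃ θ ∈ Θ, a T • (θ0 - θ) ∈ fatSublevel I θ r δ ∧ ε ≤ ‖θ - θ0‖ := by
    intro n
    obtain ⟨T, hT, hnot⟩ := (not_eventually.mp hcon).forall_exists_of_atTop (n : ℝ)
    push Not at hnot
    exact ⟨T, hT, hnot⟩
  choose T hT θs hθs hmem hfar using hbad
  choose ϑs hϑs hclose using fun n => exists_mem_sublevelSet_of_mem_fatSublevel (hmem n)
  have hgrowth : ∀ n, |a (T n)| * ‖θs n - θ0‖ - δ ≤ ‖ϑs n‖ := by
    intro n
    have := norm_sub_norm_le (a (T n) • (θ0 - θs n)) (ϑs n)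
    rw [norm_smul, Real.norm_eq_abs, norm_sub_rev] at this
    linarith [hclose n]
  have hc : Tendsto (fun n => |a (T n)|) atTop atTop :=
    tendsto_abs_atTop_atTop.comp (ha.comp (tendsto_atTop_mono hT tendsto_natCast_atTop_atTop))
  obtain ⟨n, hn⟩ := exists_lt_rate_of_far hG1 hG2 hε hδ hc hθs hfar hgrowth ENNReal.ofReal_ne_top
  exact absurd (hϑs n) (not_le.mpr hn)

lemma eventually_upperCB_le {Θ : Set E} {I : E → E → ENNReal} {J : E → ℝ}
    (hG1 : GrowthG1 Θ I) (hG2 : GrowthG2 Θ I) {a : ℝ → ℝ} (ha : Tendsto a atTop atTop)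
    {r δ : ℝ} (hδ : 0 ≤ δ) {θ0 : E} (hθ0 : θ0 ∈ Θ) (hI0 : I θ0 0 = 0)
    (hJ : ContinuousWithinAt J Θ θ0) {η : ℝ} (hη : 0 < η) :
    ∀ᶠ T in atTop, upperCB Θ I J r δ a T θ0 ≤ J θ0 + η := by
  obtain ⟨ε, hε, hJε⟩ := Metric.continuousWithinAt_iff.mp hJ η hη
  filter_upwards [eventually_norm_sub_lt_of_smul_mem_fatSublevel hG1 hG2 ha hδ θ0 hε] with T hT
  refine csSup_le ⟨J θ0, θ0, ⟨hθ0, ?_⟩, rfl⟩ ?_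
  · simpa using zero_mem_fatSublevel hδ hI0
  · rintro _ ⟨θ, ⟨hθ, hmem⟩, rfl⟩
    have hJθ := hJε hθ (by rw [dist_eq_norm]; exact hT θ hθ hmem)
    rw [Real.dist_eq] at hJθ
    linarith [(abs_lt.mp hJθ).2]

lemma norm_le_of_norm_smul_lt_one {a ρ : ℝ} {v : E} (hρ : 0 < ρ) (ha : ρ⁻¹ ≤ a)
    (hv : ‖a • v‖ < 1) : ‖v‖ ≤ ρ := by
  have ha0 : 0 < a := (inv_pos.mpr hρ).trans_le ha
  have haρ : 1 ≤ a * ρ := by rwa [inv_le_iff_one_le_mul₀ hρ] at ha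
  rw [norm_smul, Real.norm_eq_abs, abs_of_pos ha0] at hv
  nlinarith [norm_nonneg v]

lemma EvEquiUSCAt.eventually_lt_of_smul_sub_mem_ball {Φ : ℝ → E → ℝ} {θ0 : E}
    (hΦ : EvEquiUSCAt Φ θ0) {a : ℝ → ℝ} (ha : Tendsto a atTop atTop) {κ η : ℝ} (hη : 0 < η)
    (hκ : ∀ᶠ T in atTop, Φ T θ0 + η ≤ κ) :
    ∀ᶠ T in atTop, ∀ x : E, a T • (x - θ0) ∈ ball (0 : E) 1 → Φ T x < κ := by
  obtain ⟨ρ, hρ, T0, -, hT0⟩ := hΦ η hη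
  filter_upwards [hκ, ha.eventually_ge_atTop ρ⁻¹, eventually_ge_atTop T0]
    with T hκT haT hT x hx
  have hxρ : x ∈ closedBall θ0 ρ := by
    rw [mem_closedBall, dist_eq_norm]
    exact norm_le_of_norm_smul_lt_one hρ haT (mem_ball_zero_iff.mp hx)
  linarith [hT0 T hT x hxρ]

lemma LDPLowerAt.liminf_nonneg {P : Measure Ω} {θhat : ℝ → Ω → E} {a b : ℝ → ℝ}
    {Irate : E → ENNReal} {θ0 : E} (h : LDPLowerAt P θhat a b Irate θ0) {G : Set E}
    (hG : IsOpen G) {ϑ : E} (hϑG : ϑ ∈ G) (hϑ : Irate ϑ = 0) :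
    0 ≤ liminf (fun T => (((b T)⁻¹ : ℝ) : EReal) *
      ENNReal.log (P {ω | a T • (θhat T ω - θ0) ∈ G})) atTop := by
  have hinf : ⨅ x ∈ G, Irate x = 0 := nonpos_iff_eq_zero.mp (hϑ ▸ biInf_le Irate hϑG)
  simpa [hinf] using h G hG

lemma tendsto_inv_mul_log_measure_of_subset {P : Measure Ω} [IsProbabilityMeasure P]
    {b : ℝ → ℝ} (hb : ∀ T, 0 ≤ b T) {s t : ℝ → Set Ω} (hst : ∀ᶠ T in atTop, s T ⊆ t T)
    (hs : 0 ≤ liminf (fun T => (((b T)⁻¹ : ℝ) : EReal) * ENNReal.log (P (s T))) atTop) :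
    Tendsto (fun T => (((b T)⁻¹ : ℝ) : EReal) * ENNReal.log (P (t T))) atTop (𝓝 0) := by
  have hb' : ∀ T, (0 : EReal) ≤ (((b T)⁻¹ : ℝ) : EReal) :=
    fun T => by exact_mod_cast inv_nonneg.mpr (hb T)
  refine tendsto_of_le_liminf_of_limsup_le (hs.trans (liminf_le_liminf ?_))
    (limsup_le_of_le (by isBoundedDefault) (Eventually.of_forall fun T => ?_))
  · filter_upwards [hst] with T hT
    exact mul_le_mul_of_nonneg_left (ENNReal.log_monotone (measure_mono hT)) (hb' T)
  · have hlog : ENNReal.log (P (t T)) ≤ 0 := ENNReal.log_one ▸ ENNReal.log_monotone prob_le_one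
    simpa using mul_le_mul_of_nonneg_left hlog (hb' T)

theorem stmt5_general (Θ : Set E) (I : E → E → ENNReal) (J : E → ℝ)
    (P : E → Measure Ω) (hP : ∀ θ, IsProbabilityMeasure (P θ))
    (θhat : ℝ → Ω → E)
    (b a : ℝ → ℝ) (hbpos : ∀ T, 0 < b T)
    (hatop : Tendsto a atTop atTop)
    (hG1 : GrowthG1 Θ I) (hG2 : GrowthG2 Θ I)
    (hI0 : ∀ θ ∈ Θ, I θ 0 = 0)
    (hJ : ContinuousOn J Θ)
    (r δ : ℝ) (hδ : 0 ≤ δ)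
    (θ'0 : E) (hθ'0 : θ'0 ∈ Θ)
    (hLDPlow : LDPLowerAt (P θ'0) θhat a b (I θ'0) θ'0)
    (Φ : ℝ → E → ℝ)
    (hΦusc : ∀ w0 : E, EvEquiUSCAt Φ w0)
    (hΔ : (0 : EReal) <
      Filter.liminf (fun T => ((upperCB Θ I J r δ a T θ'0 - Φ T θ'0 : ℝ) : EReal)) atTop) :
    Tendsto
      (fun T => (((b T)⁻¹ : ℝ) : EReal) *
        ENNReal.log (P θ'0 {ω | J θ'0 > Φ T (θhat T ω)}))
      atTop (nhds 0) := by
  have := hP θ'0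
  obtain ⟨c, hc0, hcΔ⟩ := EReal.exists_between_coe_real hΔ
  have hc : (0 : ℝ) < c := by exact_mod_cast hc0
  have hgap : ∀ᶠ T in atTop, Φ T θ'0 + c / 2 ≤ J θ'0 := by
    filter_upwards [eventually_lt_of_lt_liminf hcΔ, eventually_upperCB_le (r := r) hG1 hG2
      hatop hδ hθ'0 (hI0 θ'0 hθ'0) (hJ θ'0 hθ'0) (half_pos hc)] with T hΔT hCB
    have : c < upperCB Θ I J r δ a T θ'0 - Φ T θ'0 := by exact_mod_cast hΔT
    linarith
  refine tendsto_inv_mul_log_measure_of_subset (fun T => (hbpos T).le)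
    (s := fun T => {ω | a T • (θhat T ω - θ'0) ∈ ball (0 : E) 1}) ?_
    (hLDPlow.liminf_nonneg isOpen_ball (mem_ball_self one_pos) (hI0 θ'0 hθ'0))
  filter_upwards [(hΦusc θ'0).eventually_lt_of_smul_sub_mem_ball hatop (half_pos hc) hgap]
    with T hT ω hω
  exact hT _ hω

/-- if `(Φ̄_T)` is eventually equi-u.s.c. and
`Δ = liminf (J̄^δ_{T,r}(θ'_0) − Φ̄_T(θ'_0)) > 0`, then under the LDP lower bound at `θ'_0`,
`lim_{T→∞} (1/b_T) log P_{θ'_0}(J(θ'_0) > Φ̄_T(θ̂_T)) = 0`. -/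
theorem stmt5 (Θ : Set E) (hΘ : Θ.Nonempty) (I : E → E → ENNReal) (J : E → ℝ)
    [MeasurableSpace E] [BorelSpace E]
    (P : E → Measure Ω) (hP : ∀ θ, IsProbabilityMeasure (P θ))
    (θhat : ℝ → Ω → E) (hθhatmeas : ∀ T, Measurable (θhat T))
    (b a : ℝ → ℝ) (hbpos : ∀ T, 0 < b T) (hbtop : Tendsto b atTop atTop)
    (hadef : ∀ T, a T = Real.sqrt (T / b T)) (hatop : Tendsto a atTop atTop)
    (hG1 : GrowthG1 Θ I) (hG2 : GrowthG2 Θ I)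
    (hI0 : ∀ θ ∈ Θ, I θ 0 = 0)
    (hJ : ContinuousOn J Θ)
    (r δ : ℝ) (hr : 0 < r) (hδ : 0 ≤ δ)
    (θ'0 : E) (hθ'0 : θ'0 ∈ Θ)
    (hLDPlow : LDPLowerAt (P θ'0) θhat a b (I θ'0) θ'0)
    (Φ : ℝ → E → ℝ) (hΦmeas : ∀ T, Measurable (Φ T))
    (hΦusc : ∀ w0 : E, EvEquiUSCAt Φ w0)
    (hΔ : (0 : EReal) <
      Filter.liminf (fun T => ((upperCB Θ I J r δ a T θ'0 - Φ T θ'0 : ℝ) : EReal)) atTop) :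
    Tendsto
      (fun T => (((b T)⁻¹ : ℝ) : EReal) *
        ENNReal.log (P θ'0 {ω | J θ'0 > Φ T (θhat T ω)}))
      atTop (nhds 0) :=
  stmt5_general Θ I J P hP θhat b a hbpos hatop hG1 hG2 hI0 hJ r δ hδ θ'0 hθ'0 hLDPlow Φ hΦusc hΔ
end
end

section
/- Locally uniform minimality: Suppose the rate-function family satisfies the growth conditions (G1) and (G2), I_θ(0) = 0 for all θ ∈ Θ, J : Θ → ℝ is uniformly continuous on bounded subsets of Θ, and the LDP lower bound holds at every θ ∈ Θ. Fix r > 0 and δ > 0. Let (H̲_T)_{T>0} and (H̄_T)_{T>0} be eventually equicontinuous families of Borel measurable functions E → ℝ satisfying, for every θ ∈ Θ, limsup_{T→∞} (1/b_T) log P_θ(J(θ) ∉ [H̲_T(θ̂_T), H̄_T(θ̂_T)]) ≤ −r. Then for every compact set Θ0 ⊆ Θ, limsup_{T→∞} sup_{θ ∈ Θ0}(J̄^δ_{T,r}(θ) − H̄_T(θ)) ≤ 0 and limsup_{T→∞} sup_{θ ∈ Θ0}(H̲_T(θ) − J̲^δ_{T,r}(θ)) ≤ 0. -/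
set_option autoImplicit false

open Filter Topology Metric Set MeasureTheory

noncomputable section

variable {E : Type*} [NormedAddCommGroup E] [NormedSpace ℝ E]

variable {Ω : Type*} [MeasurableSpace Ω]

/-- Eventual equi-lower semicontinuity at a point: `(−φ_T)` is eventually equi-u.s.c. -/
def EvEquiLSCAt {W : Type*} [PseudoMetricSpace W] (φ : ℝ → W → ℝ) (w0 : W) : Prop :=
  EvEquiUSCAt (fun T w => -φ T w) w0

/-- Eventual equicontinuity at a point. -/
def EvEquicontinuousAt {W : Type*} [PseudoMetricSpace W] (φ : ℝ → W → ℝ) (w0 : W) : Prop :=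
  ∀ ε > (0 : ℝ), ∃ δ > (0 : ℝ), ∃ T0 > (0 : ℝ),
    ∀ T ≥ T0, ∀ w ∈ Metric.closedBall w0 δ, |φ T w - φ T w0| < ε

/- Sublevel sets of the rate functions grow at most linearly in `‖θ‖` (by G1 on bounded parameter
sets and G2 far out), so the condition `a_T (θ₀ - θ) ∈ S^δ_{θ,r}` forces `θ` to within `O(1/a_T)`
of `θ₀`, uniformly for `θ₀` in a bounded set. At a fixed `θ`, the LDP lower bound and `I_θ(0) = 0`
make `θ̂_T ∈ B(θ, 1/a_T)` sub-exponentially likely, whereas `H̄_T(θ̂_T) < J(θ)` has probability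
at most `e^{-r b_T + o(b_T)}`; so some realisation near `θ` has `J(θ) ≤ H̄_T(θ̂_T)`, and
equicontinuity gives `J(θ) ≤ H̄_T(θ) + ε` eventually. Continuity of `J`, equicontinuity of `H̄_T`
and compactness of `Θ₀` make all of this uniform on `Θ₀`. The lower bound is the upper one for `-J` and `-H̲_T`. -/

def confidenceSet (Θ : Set E) (I : E → E → ENNReal) (r δ : ℝ) (a : ℝ → ℝ) (T : ℝ) (θ' : E) :
    Set E :=
  {θ : E | θ ∈ Θ ∧ a T • (θ' - θ) ∈ fatSublevel I θ r δ}

section Growth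

variable {F : Type*} [NormedAddCommGroup F] {Θ : Set F} {I : F → F → ENNReal}

lemma mem_fatSublevel_iff {θ x : F} {r δ : ℝ} (hδ : δ ≠ 0) :
    x ∈ fatSublevel I θ r δ ↔ ∃ ϑ ∈ sublevelSet I θ r, dist x ϑ < δ := by
  simp [fatSublevel, hδ, mem_ball]

lemma GrowthG1.exists_norm_le (hG1 : GrowthG1 Θ I) (r K : ℝ) :
    ∃ R : ℝ, ∀ θ ∈ Θ, ‖θ‖ ≤ K → ∀ ϑ ∈ sublevelSet I θ r, ‖ϑ‖ ≤ R := by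
  by_contra! h
  choose θs hθs hθK ϑs hϑs hϑR using fun n : ℕ => h n
  have hI := hG1 θs ϑs hθs ⟨K, hθK⟩
    (tendsto_atTop_mono (fun n => (hϑR n).le) tendsto_natCast_atTop_atTop)
  obtain ⟨n, hn⟩ := (hI.eventually_const_lt ENNReal.ofReal_lt_top).exists
  exact (hϑs n).not_gt hn

lemma GrowthG2.exists_norm_le_mul (hG2 : GrowthG2 Θ I) (r : ℝ) :
    ∃ M c : ℝ, ∀ θ ∈ Θ, M ≤ ‖θ‖ → ∀ ϑ ∈ sublevelSet I θ r, ‖ϑ‖ ≤ c * ‖θ‖ := by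
  by_contra! h
  choose θs hθs hθM ϑs hϑs hϑc using fun n : ℕ => h (n + 1) n
  have hθpos : ∀ n, 0 < ‖θs n‖ := fun n => (Nat.cast_add_one_pos n).trans_le (hθM n)
  have hθtop : Tendsto (fun n => ‖θs n‖) atTop atTop :=
    tendsto_atTop_mono (fun n => (le_add_of_nonneg_right zero_le_one).trans (hθM n))
      tendsto_natCast_atTop_atTop
  have hratio : Tendsto (fun n => ‖ϑs n‖ / ‖θs n‖) atTop atTop :=
    tendsto_atTop_mono (fun n => (le_div_iff₀ (hθpos n)).2 (hϑc n).le)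
      tendsto_natCast_atTop_atTop
  have hle : limsup (fun n => I (θs n) (ϑs n)) atTop ≤ ENNReal.ofReal r :=
    limsup_le_of_le (h := Eventually.of_forall hϑs)
  simp [hG2 θs ϑs hθs hθtop hratio] at hle

lemma GrowthG1.exists_norm_le_add_mul (hG1 : GrowthG1 Θ I) (hG2 : GrowthG2 Θ I) (r : ℝ) :
    ∃ R c : ℝ, 0 ≤ c ∧ ∀ θ ∈ Θ, ∀ ϑ ∈ sublevelSet I θ r, ‖ϑ‖ ≤ R + c * ‖θ‖ := by
  obtain ⟨M, c, hc⟩ := hG2.exists_norm_le_mul r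
  obtain ⟨R, hR⟩ := hG1.exists_norm_le r M
  refine ⟨max R 0, max c 0, le_max_right _ _, fun θ hθ ϑ hϑ => ?_⟩
  have hcθ : c * ‖θ‖ ≤ max c 0 * ‖θ‖ := by gcongr; exact le_max_left _ _
  have hnonneg : 0 ≤ max c 0 * ‖θ‖ := mul_nonneg (le_max_right _ _) (norm_nonneg θ)
  rcases le_total ‖θ‖ M with hθM | hθM
  · linarith [hR θ hθ hθM ϑ hϑ, le_max_left R 0]
  · linarith [hc θ hθ hθM ϑ hϑ, le_max_right R 0]

end Growth

lemma eventually_dist_lt_of_mem_confidenceSet {Θ : Set E} {I : E → E → ENNReal}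
    (hG1 : GrowthG1 Θ I) (hG2 : GrowthG2 Θ I) {a : ℝ → ℝ} (hatop : Tendsto a atTop atTop)
    {r δ : ℝ} (hδ : 0 < δ) {Θ0 : Set E} (hΘ0 : Bornology.IsBounded Θ0) {η : ℝ} (hη : 0 < η) :
    ∀ᶠ T in atTop, ∀ θ0 ∈ Θ0, ∀ θ ∈ confidenceSet Θ I r δ a T θ0, dist θ θ0 < η := by
  obtain ⟨R, c, hc, hRc⟩ := hG1.exists_norm_le_add_mul hG2 r
  obtain ⟨K, hK⟩ := isBounded_iff_forall_norm_le.1 hΘ0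
  filter_upwards [hatop.eventually_gt_atTop (max (2 * c) (2 * (δ + R + c * K) / η))]
    with T hT θ0 hθ0 θ ⟨hθ, hmem⟩
  obtain ⟨ϑ, hϑ, hdist⟩ := (mem_fatSublevel_iff hδ.ne').1 hmem
  have ha : 2 * c < a T := (le_max_left _ _).trans_lt hT
  have haη : 2 * (δ + R + c * K) < a T * η := (div_lt_iff₀ hη).1 ((le_max_right _ _).trans_lt hT)
  have hθK : ‖θ‖ ≤ K + ‖θ0 - θ‖ := by
    rw [norm_sub_rev]; exact norm_le_insert' θ θ0 |>.trans (by linarith [hK θ0 hθ0])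
  have hax : a T * ‖θ0 - θ‖ < δ + R + c * K + c * ‖θ0 - θ‖ :=
    calc a T * ‖θ0 - θ‖ = ‖a T • (θ0 - θ)‖ := by
          rw [norm_smul, Real.norm_of_nonneg (by linarith)]
      _ ≤ ‖ϑ‖ + dist (a T • (θ0 - θ)) ϑ := by rw [dist_eq_norm]; exact norm_le_insert' _ _
      _ < R + c * ‖θ‖ + δ := add_lt_add_of_le_of_lt (hRc θ hθ ϑ hϑ) hdist
      _ ≤ δ + R + c * K + c * ‖θ0 - θ‖ := by nlinarith
  rw [dist_comm, dist_eq_norm]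
  nlinarith [mul_nonneg (sub_nonneg.2 ha.le) (norm_nonneg (θ0 - θ))]

lemma scaledLog_measure_mono {μ : Measure Ω} {c : ℝ} (hc : 0 ≤ c) {A B : Set Ω} (h : A ⊆ B) :
    (c : EReal) * ENNReal.log (μ A) ≤ (c : EReal) * ENNReal.log (μ B) :=
  mul_le_mul_of_nonneg_left (ENNReal.log_monotone (measure_mono h)) (by exact_mod_cast hc)

lemma limsup_scaledLog_measure_mono {μ : Measure Ω} {b : ℝ → ℝ} (hb : ∀ T, 0 < b T)
    {A B : ℝ → Set Ω} (h : ∀ T, A T ⊆ B T) :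
    limsup (fun T => (((b T)⁻¹ : ℝ) : EReal) * ENNReal.log (μ (A T))) atTop ≤
      limsup (fun T => (((b T)⁻¹ : ℝ) : EReal) * ENNReal.log (μ (B T))) atTop :=
  limsup_le_limsup <| Eventually.of_forall fun T =>
    scaledLog_measure_mono (inv_nonneg.2 (hb T).le) (h T)

section LDP

variable {P : Measure Ω} {θhat : ℝ → Ω → E} {a b : ℝ → ℝ} {Irate : E → ENNReal} {θ : E}

lemma LDPLowerAt.eventually_lt_log_measure_ball (h : LDPLowerAt P θhat a b Irate θ)
    (h0 : Irate 0 = 0) {r : ℝ} (hr : 0 < r) :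
    ∀ᶠ T in atTop, ((-r : ℝ) : EReal) <
      (((b T)⁻¹ : ℝ) : EReal) * ENNReal.log (P {ω | a T • (θhat T ω - θ) ∈ ball (0 : E) 1}) := by
  have hinf : (⨅ ϑ ∈ ball (0 : E) 1, Irate ϑ) = 0 :=
    nonpos_iff_eq_zero.1 (h0 ▸ iInf₂_le 0 (mem_ball_self one_pos))
  refine eventually_lt_of_lt_liminf (lt_of_lt_of_le ?_ (h _ isOpen_ball))
  rw [hinf, EReal.coe_ennreal_zero, neg_zero]
  exact_mod_cast neg_lt_zero.2 hr

lemma LDPLowerAt.eventually_le_add (hbpos : ∀ T, 0 < b T) (hatop : Tendsto a atTop atTop)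
    (hLDP : LDPLowerAt P θhat a b Irate θ) (h0 : Irate 0 = 0)
    {H : ℝ → E → ℝ} (hH : EvEquicontinuousAt H θ) {y r : ℝ} (hr : 0 < r)
    (hacc : limsup (fun T => (((b T)⁻¹ : ℝ) : EReal) *
        ENNReal.log (P {ω | H T (θhat T ω) < y})) atTop ≤ ((-r : ℝ) : EReal))
    {ε : ℝ} (hε : 0 < ε) : ∀ᶠ T in atTop, y ≤ H T θ + ε := by
  obtain ⟨ρ, hρ, T0, -, hHρ⟩ := hH ε hε
  have hsmall : ∀ᶠ T in atTop, (((b T)⁻¹ : ℝ) : EReal) *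
      ENNReal.log (P {ω | H T (θhat T ω) < y}) < ((-(r / 2) : ℝ) : EReal) :=
    eventually_lt_of_limsup_lt (hacc.trans_lt (by exact_mod_cast (by linarith : -r < -(r / 2))))
  filter_upwards [hLDP.eventually_lt_log_measure_ball h0 (half_pos hr), hsmall,
    hatop.eventually_ge_atTop ρ⁻¹, eventually_ge_atTop T0] with T hlarge hsmall haT hT
  obtain ⟨ω, hω, hyω⟩ : ∃ ω, ‖a T • (θhat T ω - θ)‖ < 1 ∧ y ≤ H T (θhat T ω) := by
    by_contra! hsub
    exact (hsmall.trans hlarge).not_ge (scaledLog_measure_mono (inv_nonneg.2 (hbpos T).le)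
      fun ω hω => hsub ω (mem_ball_zero_iff.1 hω))
  have hclose : θhat T ω ∈ closedBall θ ρ := by
    rw [norm_smul, Real.norm_of_nonneg ((inv_pos.2 hρ).le.trans haT)] at hω
    have : ρ⁻¹ * ‖θhat T ω - θ‖ < 1 :=
      (mul_le_mul_of_nonneg_right haT (norm_nonneg _)).trans_lt hω
    rw [inv_mul_lt_iff₀ hρ, mul_one] at this
    exact mem_closedBall_iff_norm.2 this.le
  linarith [(abs_lt.1 (hHρ T hT _ hclose)).2]

end LDP

lemma IsCompact.eventually_forall_of_forall_exists_mem_nhdsWithin {X ι : Type*}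
    [TopologicalSpace X] {K : Set X} (hK : IsCompact K) {l : Filter ι} {p : ι → X → Prop}
    (h : ∀ x ∈ K, ∃ t ∈ 𝓝[K] x, ∀ᶠ i in l, ∀ y ∈ t, p i y) : ∀ᶠ i in l, ∀ y ∈ K, p i y := by
  refine hK.induction_on (p := fun s => ∀ᶠ i in l, ∀ y ∈ s, p i y) ?_ ?_ ?_ h
  · simp
  · exact fun s t hst ht => ht.mono fun i hi y hy => hi y (hst hy)
  · exact fun s t hs ht => (hs.and ht).mono fun i hi y hy => hy.elim (hi.1 y) (hi.2 y)

lemma eventually_forall_le_add_of_dist_lt {X : Type*} [PseudoMetricSpace X] {Θ Θ0 : Set X}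
    (hΘ0 : Θ0 ⊆ Θ) (hcpt : IsCompact Θ0) {J : X → ℝ} (hJ : ContinuousOn J Θ) {H : ℝ → X → ℝ}
    (hH : ∀ θ, EvEquicontinuousAt H θ) (hpt : ∀ θ ∈ Θ0, ∀ ε > 0, ∀ᶠ T in atTop, J θ ≤ H T θ + ε)
    {S : ℝ → X → Set X} (hSΘ : ∀ T θ0, S T θ0 ⊆ Θ)
    (hS : ∀ η > 0, ∀ᶠ T in atTop, ∀ θ0 ∈ Θ0, ∀ θ ∈ S T θ0, dist θ θ0 < η)
    {ε : ℝ} (hε : 0 < ε) :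
    ∀ᶠ T in atTop, ∀ θ0 ∈ Θ0, ∀ θ ∈ S T θ0, J θ ≤ H T θ0 + ε := by
  refine hcpt.eventually_forall_of_forall_exists_mem_nhdsWithin fun θs hθs => ?_
  obtain ⟨ρ1, hρ1, hJρ⟩ :=
    Metric.continuousWithinAt_iff.1 (hJ θs (hΘ0 hθs)) (ε / 3) (by positivity)
  obtain ⟨ρ2, hρ2, T0, -, hHρ⟩ := hH θs (ε / 3) (by positivity)
  obtain ⟨η, hη, hηρ1, hηρ2⟩ : ∃ η > 0, 2 * η ≤ ρ1 ∧ η ≤ ρ2 := ⟨min ρ1 ρ2 / 2, by positivity,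
    by linarith [min_le_left ρ1 ρ2], by linarith [min_le_right ρ1 ρ2]⟩
  refine ⟨Θ0 ∩ ball θs η, inter_mem_nhdsWithin Θ0 (ball_mem_nhds θs hη), ?_⟩
  filter_upwards [hpt θs hθs (ε / 3) (by positivity), hS η hη, eventually_ge_atTop T0]
    with T hJH hSη hT θ0 ⟨hθ0, hθ0s⟩ θ hθ
  have hθs' : dist θ θs < ρ1 := by
    linarith [dist_triangle θ θ0 θs, hSη θ0 hθ0 θ hθ, mem_ball.1 hθ0s]
  have hJθ := (abs_lt.1 (hJρ (hSΘ T θ0 hθ) hθs')).2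
  have hHθ0 := (abs_lt.1 (hHρ T hT θ0 (mem_closedBall.2 ((mem_ball.1 hθ0s).le.trans hηρ2)))).1
  linarith

lemma EvEquicontinuousAt.neg {W : Type*} [PseudoMetricSpace W] {φ : ℝ → W → ℝ} {w0 : W}
    (h : EvEquicontinuousAt φ w0) : EvEquicontinuousAt (fun T w => -φ T w) w0 := by
  intro ε hε
  obtain ⟨d, hd, T0, hT0, hφ⟩ := h ε hε
  exact ⟨d, hd, T0, hT0, fun T hT w hw => by rw [neg_sub_neg, abs_sub_comm]; exact hφ T hT w hw⟩

lemma continuousOn_of_uniformContinuousOn_closedBall_inter {X Y : Type*} [PseudoMetricSpace X]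
    [UniformSpace Y] {s : Set X} {f : X → Y}
    (hf : ∀ x ∈ s, UniformContinuousOn f (closedBall x 1 ∩ s)) : ContinuousOn f s := fun x hx =>
  ((hf x hx).continuousOn x ⟨mem_closedBall_self zero_le_one, hx⟩).mono_of_mem_nhdsWithin
    (inter_mem (mem_nhdsWithin_of_mem_nhds (closedBall_mem_nhds x one_pos)) self_mem_nhdsWithin)

lemma limsup_iSup_coe_le_zero {α ι : Type*} {l : Filter α} {s : Set ι} {f : α → ι → ℝ}
    (h : ∀ ε > 0, ∀ᶠ t in l, ∀ i ∈ s, f t i ≤ ε) :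
    limsup (fun t => ⨆ i ∈ s, ((f t i : ℝ) : EReal)) l ≤ 0 := by
  refine le_of_forall_gt_imp_ge_of_dense fun x hx => ?_
  obtain ⟨ε, hε, hεx⟩ := EReal.exists_between_coe_real hx
  refine limsup_le_of_le (h := (h ε (by exact_mod_cast hε)).mono fun t ht => ?_)
  exact iSup₂_le fun i hi => (EReal.coe_le_coe_iff.2 (ht i hi)).trans hεx.le

section ConfidenceBounds

variable {Θ : Set E} {I : E → E → ENNReal} {J : E → ℝ} {a : ℝ → ℝ} {r δ : ℝ}

lemma self_mem_confidenceSet {θ : E} (hθ : θ ∈ Θ) (hI0 : I θ 0 = 0) (hδ : 0 < δ) (T : ℝ) :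
    θ ∈ confidenceSet Θ I r δ a T θ := by
  refine ⟨hθ, ?_⟩
  rw [sub_self, smul_zero, mem_fatSublevel_iff hδ.ne']
  exact ⟨0, by simp [sublevelSet, hI0], by simpa using hδ⟩

lemma lowerCB_eq_neg_upperCB (T : ℝ) (θ' : E) :
    lowerCB Θ I J r δ a T θ' = -upperCB Θ I (-J) r δ a T θ' := by
  rw [lowerCB, upperCB, show -J = Neg.neg ∘ J from rfl, image_comp, image_neg_eq_neg,
    Real.sSup_neg, neg_neg]

lemma eventually_forall_upperCB_sub_le {P : E → Measure Ω} {θhat : ℝ → Ω → E} {b : ℝ → ℝ}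
    (hbpos : ∀ T, 0 < b T) (hatop : Tendsto a atTop atTop)
    (hG1 : GrowthG1 Θ I) (hG2 : GrowthG2 Θ I) (hI0 : ∀ θ ∈ Θ, I θ 0 = 0)
    (hJ : ContinuousOn J Θ) (hLDPlow : ∀ θ ∈ Θ, LDPLowerAt (P θ) θhat a b (I θ) θ)
    (hr : 0 < r) (hδ : 0 < δ) {H : ℝ → E → ℝ} (hH : ∀ θ, EvEquicontinuousAt H θ)
    (hacc : ∀ θ ∈ Θ, limsup (fun T => (((b T)⁻¹ : ℝ) : EReal) *
        ENNReal.log (P θ {ω | H T (θhat T ω) < J θ})) atTop ≤ ((-r : ℝ) : EReal))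
    {Θ0 : Set E} (hΘ0 : Θ0 ⊆ Θ) (hcpt : IsCompact Θ0) {ε : ℝ} (hε : 0 < ε) :
    ∀ᶠ T in atTop, ∀ θ0 ∈ Θ0, upperCB Θ I J r δ a T θ0 - H T θ0 ≤ ε := by
  have hpt : ∀ θ ∈ Θ0, ∀ ε > 0, ∀ᶠ T in atTop, J θ ≤ H T θ + ε := fun θ hθ _ hε =>
    (hLDPlow θ (hΘ0 hθ)).eventually_le_add hbpos hatop (hI0 θ (hΘ0 hθ)) (hH θ) hr
      (hacc θ (hΘ0 hθ)) hε
  filter_upwards [eventually_forall_le_add_of_dist_lt hΘ0 hcpt hJ hH hpt (fun _ _ _ h => h.1)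
    (fun _ hη => eventually_dist_lt_of_mem_confidenceSet hG1 hG2 hatop hδ hcpt.isBounded hη) hε]
    with T hT θ0 hθ0
  have hself := self_mem_confidenceSet (r := r) (a := a) (hΘ0 hθ0) (hI0 θ0 (hΘ0 hθ0)) hδ T
  have : upperCB Θ I J r δ a T θ0 ≤ H T θ0 + ε :=
    csSup_le ⟨J θ0, mem_image_of_mem J hself⟩ (forall_mem_image.2 (hT θ0 hθ0))
  linarith

end ConfidenceBounds

theorem stmt16_general (Θ : Set E) (I : E → E → ENNReal) (J : E → ℝ)
    (P : E → Measure Ω)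
    (θhat : ℝ → Ω → E)
    (b a : ℝ → ℝ) (hbpos : ∀ T, 0 < b T)
    (hatop : Tendsto a atTop atTop)
    (hG1 : GrowthG1 Θ I) (hG2 : GrowthG2 Θ I)
    (hI0 : ∀ θ ∈ Θ, I θ 0 = 0)
    (hJ : ∀ a0 > (0 : ℝ), ∀ θ0 ∈ Θ, UniformContinuousOn J (Metric.closedBall θ0 a0 ∩ Θ))
    (hLDPlow : ∀ θ ∈ Θ, LDPLowerAt (P θ) θhat a b (I θ) θ)
    (r δ : ℝ) (hr : 0 < r) (hδ : 0 < δ)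
    (Hbar Hlow : ℝ → E → ℝ)
    (hHbarequi : ∀ w0 : E, EvEquicontinuousAt Hbar w0)
    (hHlowequi : ∀ w0 : E, EvEquicontinuousAt Hlow w0)
    (haccurate : ∀ θ ∈ Θ,
      Filter.limsup
        (fun T => (((b T)⁻¹ : ℝ) : EReal) *
          ENNReal.log (P θ {ω | ¬(Hlow T (θhat T ω) ≤ J θ ∧ J θ ≤ Hbar T (θhat T ω))}))
        atTop ≤ ((-r : ℝ) : EReal)) :
    ∀ Θ0 : Set E, Θ0 ⊆ Θ → IsCompact Θ0 →
      Filter.limsup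
          (fun T => ⨆ θ ∈ Θ0, ((upperCB Θ I J r δ a T θ - Hbar T θ : ℝ) : EReal))
          atTop ≤ 0 ∧
      Filter.limsup
          (fun T => ⨆ θ ∈ Θ0, ((Hlow T θ - lowerCB Θ I J r δ a T θ : ℝ) : EReal))
          atTop ≤ 0 := by
  intro Θ0 hΘ0 hcpt
  have hJc : ContinuousOn J Θ :=
    continuousOn_of_uniformContinuousOn_closedBall_inter fun θ hθ => hJ 1 one_pos θ hθ
  have haccBar : ∀ θ ∈ Θ, limsup (fun T => (((b T)⁻¹ : ℝ) : EReal) *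
      ENNReal.log (P θ {ω | Hbar T (θhat T ω) < J θ})) atTop ≤ ((-r : ℝ) : EReal) := fun θ hθ => by
    refine le_trans (limsup_scaledLog_measure_mono hbpos fun _ _ hω => ?_) (haccurate θ hθ)
    exact fun h => not_le.2 hω h.2
  have haccLow : ∀ θ ∈ Θ, limsup (fun T => (((b T)⁻¹ : ℝ) : EReal) *
      ENNReal.log (P θ {ω | -Hlow T (θhat T ω) < -J θ})) atTop ≤ ((-r : ℝ) : EReal) :=
    fun θ hθ => by
      refine le_trans (limsup_scaledLog_measure_mono hbpos fun _ _ hω => ?_) (haccurate θ hθ)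
      exact fun h => not_le.2 (neg_lt_neg_iff.1 hω) h.1
  have hup := fun ε (hε : 0 < ε) => eventually_forall_upperCB_sub_le hbpos hatop hG1 hG2 hI0
    hJc hLDPlow hr hδ hHbarequi haccBar hΘ0 hcpt hε
  have hlow := fun ε (hε : 0 < ε) => eventually_forall_upperCB_sub_le hbpos hatop hG1 hG2 hI0
    hJc.neg hLDPlow hr hδ (fun θ => (hHlowequi θ).neg) haccLow hΘ0 hcpt hε
  refine ⟨limsup_iSup_coe_le_zero hup, limsup_iSup_coe_le_zero fun ε hε =>
    (hlow ε hε).mono fun T hT θ0 hθ0 => ?_⟩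
  rw [lowerCB_eq_neg_upperCB]
  linarith [hT θ0 hθ0]

/-- locally uniform minimality: against any exponentially accurate
eventually equicontinuous interval family `(H̲_T, H̄_T)`, for every compact `Θ0 ⊆ Θ`,
`limsup sup_{θ∈Θ0}(J̄^δ_{T,r}(θ) − H̄_T(θ)) ≤ 0` and
`limsup sup_{θ∈Θ0}(H̲_T(θ) − J̲^δ_{T,r}(θ)) ≤ 0`. -/
theorem stmt16 (Θ : Set E) (hΘ : Θ.Nonempty) (I : E → E → ENNReal) (J : E → ℝ)
    [MeasurableSpace E] [BorelSpace E]
    (P : E → Measure Ω) (hP : ∀ θ, IsProbabilityMeasure (P θ))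
    (θhat : ℝ → Ω → E) (hθhatmeas : ∀ T, Measurable (θhat T))
    (b a : ℝ → ℝ) (hbpos : ∀ T, 0 < b T) (hbtop : Tendsto b atTop atTop)
    (hadef : ∀ T, a T = Real.sqrt (T / b T)) (hatop : Tendsto a atTop atTop)
    (hG1 : GrowthG1 Θ I) (hG2 : GrowthG2 Θ I)
    (hI0 : ∀ θ ∈ Θ, I θ 0 = 0)
    (hJ : ∀ a0 > (0 : ℝ), ∀ θ0 ∈ Θ, UniformContinuousOn J (Metric.closedBall θ0 a0 ∩ Θ))
    (hLDPlow : ∀ θ ∈ Θ, LDPLowerAt (P θ) θhat a b (I θ) θ)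
    (r δ : ℝ) (hr : 0 < r) (hδ : 0 < δ)
    (Hbar Hlow : ℝ → E → ℝ)
    (hHbarmeas : ∀ T, Measurable (Hbar T)) (hHlowmeas : ∀ T, Measurable (Hlow T))
    (hHbarequi : ∀ w0 : E, EvEquicontinuousAt Hbar w0)
    (hHlowequi : ∀ w0 : E, EvEquicontinuousAt Hlow w0)
    (haccurate : ∀ θ ∈ Θ,
      Filter.limsup
        (fun T => (((b T)⁻¹ : ℝ) : EReal) *
          ENNReal.log (P θ {ω | ¬(Hlow T (θhat T ω) ≤ J θ ∧ J θ ≤ Hbar T (θhat T ω))}))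
        atTop ≤ ((-r : ℝ) : EReal)) :
    ∀ Θ0 : Set E, Θ0 ⊆ Θ → IsCompact Θ0 →
      Filter.limsup
          (fun T => ⨆ θ ∈ Θ0, ((upperCB Θ I J r δ a T θ - Hbar T θ : ℝ) : EReal))
          atTop ≤ 0 ∧
      Filter.limsup
          (fun T => ⨆ θ ∈ Θ0, ((Hlow T θ - lowerCB Θ I J r δ a T θ : ℝ) : EReal))
          atTop ≤ 0 :=
  stmt16_general Θ I J P θhat b a hbpos hatop hG1 hG2 hI0 hJ hLDPlow r δ hr hδ Hbar Hlow hHbarequi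
    hHlowequi haccurate
end
end
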